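/- arXiv:2101.08519 — 2 statements merged into one kernel-verified Lean document; each statement's English description precedes it below -/
import Mathlib

section
/- Let h : ℝ^n → ℝ be differentiable with L_h-Lipschitz gradient ∇h and g : ℝ^n → ℝ be lower semicontinuous and ρ_g-weakly convex with the implicit bounded subgradient property with constant L̂_g > 0. Let η ∈ (0, 2), 0 < γ < 2/((ρ_g + L_h)(1 + √(1 + 2(2 − η)ηL_h²/(ρ_g + L_h)²))), and fix an integer K ≥ 1. Assume b lies in the column space of A and σ̃ > 0 satisfies ‖Aᵀv‖² ≥ σ̃‖v‖² for every v in the column space of A; set c_{γ,A} := γ²σ̃. Let (x^k, z^k, λ^k) be LiMEAL iterates with penalty parameters β_k > 0 chosen so that α_k := (β_k + β_{k+1} + γη(1 − η/2))/(2c_{γ,A}β_k²) = ᾱ*/K for every k, where 0 < ᾱ* ≤ min{ (1 − γ(ρ_g + L_h) − η(1 − η/2)γ²L_h²)/(8γ(1 + γ²L_h²)), (1/(16γ))(2/η − 1) }. Suppose Ẽ^k := P_{β_k}(x^k, z^k, λ^k) + 4α_k(γ²L_h²‖x^k − x^{k−1}‖² + ‖z^k − z^{k−1}‖²) ≥ E*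 for all 1 ≤ k ≤ K + 1. Then min_{1≤t≤K} G_t ≤ √( (Ẽ¹ − E* + 16γ²L̂_g²ᾱ*) / ((γη/4)(1 − η/2)) ) / √K, where G_t := √(‖γ⁻¹(z^t − x^{t+1}) + ∇h(x^{t+1}) − ∇h(x^t)‖² + β_t⁻²‖λ^{t+1} − λ^t‖²). -/
/-!
The Lyapunov function `Ẽᵏ` decreases along the iteration up to the additive error
`16 γ² L̂_g² α`. Minimality of `xᵏ⁺¹` in the linearized subproblem, which is
`(1/γ - ρ_g)`-strongly convex, together with the descent lemma for `h` lowers `P` by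
`(1/γ - ρ_g - L_h)/2 ‖xᵏ⁺¹ - xᵏ‖²`; the `z`- and `λ`-updates change `P` by an explicit amount.
The multiplier step is controlled through `‖Aᵀv‖² ≥ σ̃‖v‖²`: subtracting two consecutive prox
identities expresses `γ Aᵀ(λᵏ⁺¹ - λᵏ)` through the differences of the iterates and of two prox
residuals, each of norm at most `γ L̂_g`. The bounds on `ᾱ*` make the resulting coefficients
absorb `G_k²`, and telescoping over `k = 1, …, K` bounds `K · min G_t²`.
-/
open scoped RealInnerProductSpace

/-- `P_β(x, z, λ) = f(x) + ⟨λ, Ax − b⟩ + (β/2)‖Ax − b‖² + (1/(2γ))‖x − z‖²`. -/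
noncomputable def Pfun {n m : ℕ} (f : EuclideanSpace ℝ (Fin n) → ℝ)
    (A : Matrix (Fin m) (Fin n) ℝ) (b : EuclideanSpace ℝ (Fin m)) (γ β : ℝ)
    (x z : EuclideanSpace ℝ (Fin n)) (lam : EuclideanSpace ℝ (Fin m)) : ℝ :=
  f x + ⟪lam, Matrix.toEuclideanLin A x - b⟫
    + β / 2 * ‖Matrix.toEuclideanLin A x - b‖ ^ 2 + 1 / (2 * γ) * ‖x - z‖ ^ 2

open Set Filter Topology

lemma norm_add_add_add_sq_le {E : Type*} [SeminormedAddCommGroup E]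
    (u v w y : E) :
    ‖u + v + w + y‖ ^ 2 ≤ 4 * (‖u‖ ^ 2 + ‖v‖ ^ 2 + ‖w‖ ^ 2 + ‖y‖ ^ 2) := by
  have htri : ‖u + v + w + y‖ ≤ ‖u‖ + ‖v‖ + ‖w‖ + ‖y‖ := norm_add₄_le
  nlinarith [norm_nonneg (u + v + w + y), sq_nonneg (‖u‖ - ‖v‖), sq_nonneg (‖u‖ - ‖w‖),
    sq_nonneg (‖u‖ - ‖y‖), sq_nonneg (‖v‖ - ‖w‖), sq_nonneg (‖v‖ - ‖y‖), sq_nonneg (‖w‖ - ‖y‖)]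

section NormedSpace

variable {E : Type*} [NormedAddCommGroup E] [NormedSpace ℝ E]

lemma norm_inv_smul_sub_add_sub_sq_le {h' : E → E} {L : ℝ}
    (hL : ∀ x y, ‖h' x - h' y‖ ≤ L * ‖x - y‖) (γ : ℝ) (x x₁ z : E) :
    ‖γ⁻¹ • (z - x₁) + h' x₁ - h' x‖ ^ 2
      ≤ 2 * (γ⁻¹) ^ 2 * ‖x₁ - z‖ ^ 2 + 2 * L ^ 2 * ‖x₁ - x‖ ^ 2 := by
  have htri : ‖γ⁻¹ • (z - x₁) + h' x₁ - h' x‖ ≤ ‖γ⁻¹‖ * ‖z - x₁‖ + L * ‖x₁ - x‖ := by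
    rw [add_sub_assoc]
    exact (norm_add_le _ _).trans (add_le_add (norm_smul _ _).le (hL _ _))
  calc ‖γ⁻¹ • (z - x₁) + h' x₁ - h' x‖ ^ 2 ≤ (‖γ⁻¹‖ * ‖z - x₁‖ + L * ‖x₁ - x‖) ^ 2 :=
        pow_le_pow_left₀ (norm_nonneg _) htri 2
    _ ≤ 2 * ((‖γ⁻¹‖ * ‖z - x₁‖) ^ 2 + (L * ‖x₁ - x‖) ^ 2) := add_sq_le
    _ = 2 * (γ⁻¹) ^ 2 * ‖x₁ - z‖ ^ 2 + 2 * L ^ 2 * ‖x₁ - x‖ ^ 2 := by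
        rw [mul_pow, mul_pow, Real.norm_eq_abs, sq_abs, norm_sub_rev z]; ring

lemma sq_mul_norm_map_sub_sq_le_of_eq_prox {F : Type*} [AddCommGroup F] [Module ℝ F]
    {prox h' : E → E} {T : F →ₗ[ℝ] E} {γ L M : ℝ}
    (hγ : 0 < γ) (hbnd : ∀ w, ‖γ⁻¹ • (w - prox w)‖ ≤ M)
    (hL : ∀ x y, ‖h' x - h' y‖ ≤ L * ‖x - y‖) {x₀ x₁ x₂ z₀ z₁ : E} {lam₁ lam₂ : F}
    (hx₁ : x₁ = prox (z₀ - γ • (h' x₀ + T lam₁)))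
    (hx₂ : x₂ = prox (z₁ - γ • (h' x₁ + T lam₂))) :
    γ ^ 2 * ‖T (lam₂ - lam₁)‖ ^ 2 ≤ 4 * ‖z₁ - z₀‖ ^ 2 + 4 * ‖x₂ - x₁‖ ^ 2
      + 4 * (γ ^ 2 * L ^ 2 * ‖x₁ - x₀‖ ^ 2) + 16 * γ ^ 2 * M ^ 2 := by
  set w₁ := z₀ - γ • (h' x₀ + T lam₁)
  set w₂ := z₁ - γ • (h' x₁ + T lam₂)
  have hres : ∀ w, ‖w - prox w‖ ≤ γ * M := fun w ↦ by
    have := hbnd w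
    rwa [norm_smul, norm_inv, Real.norm_of_nonneg hγ.le, inv_mul_le_iff₀ hγ] at this
  have hsplit : γ • T (lam₂ - lam₁) = (z₁ - z₀) + -(x₂ - x₁) + -(γ • (h' x₁ - h' x₀))
      + -((w₂ - prox w₂) - (w₁ - prox w₁)) := by
    rw [← hx₁, ← hx₂, map_sub]; simp only [w₁, w₂]; module
  have hgrad : ‖γ • (h' x₁ - h' x₀)‖ ^ 2 ≤ γ ^ 2 * L ^ 2 * ‖x₁ - x₀‖ ^ 2 := by
    rw [norm_smul, Real.norm_of_nonneg hγ.le, mul_pow, mul_assoc, ← mul_pow L]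
    gcongr
    exact hL x₁ x₀
  have hresid : ‖(w₂ - prox w₂) - (w₁ - prox w₁)‖ ^ 2 ≤ 4 * γ ^ 2 * M ^ 2 := by
    have := (norm_sub_le _ _).trans (add_le_add (hres w₂) (hres w₁))
    nlinarith [norm_nonneg ((w₂ - prox w₂) - (w₁ - prox w₁))]
  have h4 := norm_add_add_add_sq_le (z₁ - z₀) (-(x₂ - x₁)) (-(γ • (h' x₁ - h' x₀)))
    (-((w₂ - prox w₂) - (w₁ - prox w₁)))
  rw [← hsplit, norm_smul, Real.norm_of_nonneg hγ.le, mul_pow] at h4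
  simp only [norm_neg] at h4
  linarith

end NormedSpace

section InnerProductSpace

variable {E : Type*} [NormedAddCommGroup E] [InnerProductSpace ℝ E]

lemma norm_smul_add_smul_sub_sq {a b : ℝ} (hab : a + b = 1) (u v w : E) :
    ‖a • u + b • v - w‖ ^ 2 = a * ‖u - w‖ ^ 2 + b * ‖v - w‖ ^ 2 - a * b * ‖u - v‖ ^ 2 := by
  obtain rfl := eq_sub_of_add_eq hab
  have huv : u - v = (u - w) - (v - w) := by abel
  have hcomb : (1 - b) • u + b • v - w = (u - w) - b • ((u - w) - (v - w)) := by module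
  rw [hcomb, huv, norm_sub_sq_real (u - w) (b • _), norm_smul,
    real_inner_smul_right, Real.norm_eq_abs, mul_pow, sq_abs, inner_sub_right,
    real_inner_self_eq_norm_sq, norm_sub_sq_real (u - w) (v - w)]
  ring

lemma StrongConvexOn.add_mul_norm_sub_sq_le_of_isMinOn {f : E → ℝ} {μ : ℝ} {x : E}
    (hf : StrongConvexOn univ μ f) (hx : IsMinOn f univ x) (y : E) :
    f x + μ / 2 * ‖y - x‖ ^ 2 ≤ f y := by
  have hθ : ∀ θ ∈ Ioc (0 : ℝ) 1, (1 - θ) * (μ / 2 * ‖y - x‖ ^ 2) ≤ f y - f x := by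
    rintro θ ⟨hθ0, hθ1⟩
    have hconv := hf.2 (mem_univ x) (mem_univ y) (sub_nonneg.2 hθ1) hθ0.le (by ring)
    have hmin : f x ≤ f ((1 - θ) • x + θ • y) := hx (mem_univ _)
    rw [norm_sub_rev] at hconv
    simp only [smul_eq_mul] at hconv
    nlinarith
  have hlim : Tendsto (fun θ : ℝ ↦ (1 - θ) * (μ / 2 * ‖y - x‖ ^ 2)) (𝓝[>] 0)
      (𝓝 ((1 - 0) * (μ / 2 * ‖y - x‖ ^ 2))) :=
    ((continuous_const.sub continuous_id).mul continuous_const).continuousWithinAt.tendsto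
  have hev : ∀ᶠ θ in 𝓝[>] (0 : ℝ), θ ∈ Ioc (0 : ℝ) 1 := Ioc_mem_nhdsGT one_pos
  have := le_of_tendsto hlim (hev.mono hθ)
  linarith

lemma strongConvexOn_linearized_subproblem {F : Type*} [NormedAddCommGroup F]
    [InnerProductSpace ℝ F] {g : E → ℝ} {ρ : ℝ}
    (hg : ConvexOn ℝ univ fun x ↦ g x + ρ / 2 * ‖x‖ ^ 2) (A : E →ₗ[ℝ] F) (b : F) (c : ℝ)
    (p x₀ z : E) (lam : F) {β : ℝ} (hβ : 0 ≤ β) (γ : ℝ) :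
    StrongConvexOn univ (1 / γ - ρ) fun x ↦ c + ⟪p, x - x₀⟫ + g x + ⟪lam, A x - b⟫
      + β / 2 * ‖A x - b‖ ^ 2 + 1 / (2 * γ) * ‖x - z‖ ^ 2 := by
  refine ⟨convex_univ, fun x _ y _ s t hs ht hst ↦ ?_⟩
  have hgst := hg.2 (mem_univ x) (mem_univ y) hs ht hst
  have hnorm := norm_smul_add_smul_sub_sq hst x y 0
  have hdist := norm_smul_add_smul_sub_sq hst x y z
  have hres := norm_smul_add_smul_sub_sq hst (A x) (A y) b
  have hres_nonneg : 0 ≤ β * (s * t * ‖A x - A y‖ ^ 2) := by positivity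
  obtain rfl := eq_sub_of_add_eq hst
  simp only [sub_zero, smul_eq_mul] at hgst hnorm
  simp only [map_add, map_smul, inner_sub_right, inner_add_right, real_inner_smul_right,
    smul_eq_mul, hres, hdist]
  rw [hnorm] at hgst
  linear_combination hgst + hres_nonneg / 2

lemma descent_lemma [CompleteSpace E] {h : E → ℝ} {h' : E → E} {L : ℝ}
    (hh' : ∀ x, HasGradientAt h (h' x) x) (hL : ∀ x y, ‖h' x - h' y‖ ≤ L * ‖x - y‖) (u v : E) :
    h v ≤ h u + ⟪h' u, v - u⟫ + L / 2 * ‖v - u‖ ^ 2 := by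
  set d := v - u
  let ψ : ℝ → ℝ := fun t ↦ h (u + t • d) - t * ⟪h' u, d⟫ - L / 2 * t ^ 2 * ‖d‖ ^ 2
  have hψ' : ∀ t, HasDerivAt ψ (⟪h' (u + t • d), d⟫ - ⟪h' u, d⟫ - L * t * ‖d‖ ^ 2) t := by
    intro t
    have hline : HasDerivAt (fun s : ℝ ↦ u + s • d) d t := by
      simpa using ((hasDerivAt_id t).smul_const d).const_add u
    have hcomp := (hh' (u + t • d)).hasFDerivAt.comp_hasDerivAt t hline
    simp only [InnerProductSpace.toDual_apply_apply] at hcomp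
    exact ((hcomp.sub ((hasDerivAt_id t).mul_const ⟪h' u, d⟫)).sub
      (((hasDerivAt_pow 2 t).const_mul (L / 2)).mul_const (‖d‖ ^ 2))).congr_deriv
        (by push_cast; ring)
  have hanti : AntitoneOn ψ (Ici 0) := by
    refine antitoneOn_of_hasDerivWithinAt_nonpos (convex_Ici 0)
      (fun t _ ↦ (hψ' t).continuousAt.continuousWithinAt)
      (fun t _ ↦ (hψ' t).hasDerivWithinAt) ?_
    intro t ht
    rw [interior_Ici] at ht
    have hlip : ‖h' (u + t • d) - h' u‖ ≤ L * (t * ‖d‖) := by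
      simpa [norm_smul, abs_of_pos (mem_Ioi.1 ht)] using hL (u + t • d) u
    have hcs := real_inner_le_norm (h' (u + t • d) - h' u) d
    rw [inner_sub_left] at hcs
    nlinarith [norm_nonneg d]
  have h01 := hanti self_mem_Ici (mem_Ici.2 zero_le_one) zero_le_one
  simp only [ψ, zero_smul, add_zero, one_smul, zero_mul, sub_zero, one_mul, d,
    add_sub_cancel] at h01
  linarith

end InnerProductSpace

lemma exists_mem_Icc_mul_le_of_forall_add_le {V G : ℕ → ℝ} {K : ℕ} {δ V₀ : ℝ} (hK : 1 ≤ K)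
    (hstep : ∀ k ∈ Icc 1 K, G k + V (k + 1) ≤ V k + δ) (hV : V₀ ≤ V (K + 1)) :
    ∃ t ∈ Icc 1 K, K * G t ≤ V 1 - V₀ + K * δ := by
  have hsum : ∑ k ∈ Finset.range K, G (k + 1) ≤ V 1 - V (K + 1) + K * δ := by
    calc ∑ k ∈ Finset.range K, G (k + 1)
        ≤ ∑ k ∈ Finset.range K, ((V (k + 1) - V (k + 1 + 1)) + δ) := by
          refine Finset.sum_le_sum fun k hk ↦ ?_
          have := hstep (k + 1) ⟨by omega, Finset.mem_range.1 hk⟩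
          linarith
      _ = V 1 - V (K + 1) + K * δ := by
          rw [Finset.sum_add_distrib, Finset.sum_range_sub' (fun k ↦ V (k + 1)),
            Finset.sum_const, Finset.card_range, nsmul_eq_mul]
  obtain ⟨k, hk, hle⟩ := Finset.exists_le_of_sum_le (s := Finset.range K)
    (Finset.nonempty_range_iff.2 (by omega))
    (f := fun k ↦ (K : ℝ) * G (k + 1)) (g := fun _ ↦ V 1 - V₀ + K * δ) (by
      rw [← Finset.mul_sum, Finset.sum_const, Finset.card_range, nsmul_eq_mul]
      have hK0 : (0 : ℝ) ≤ K := K.cast_nonneg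
      nlinarith)
  exact ⟨k + 1, ⟨by omega, Finset.mem_range.1 hk⟩, hle⟩

lemma limeal_primal_coeff_le {ρ L γ η α : ℝ} (hγ : 0 < γ)
    (hα : α ≤ (1 - γ * (ρ + L) - η * (1 - η / 2) * γ ^ 2 * L ^ 2)
      / (8 * γ * (1 + γ ^ 2 * L ^ 2))) :
    2 * (γ * η / 4 * (1 - η / 2)) * L ^ 2 + 4 * α * (1 + γ ^ 2 * L ^ 2)
      ≤ (1 / γ - ρ - L) / 2 := by
  rw [le_div_iff₀ (by positivity)] at hα
  rw [← sub_nonneg]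
  have e : (1 / γ - ρ - L) / 2 - (2 * (γ * η / 4 * (1 - η / 2)) * L ^ 2
      + 4 * α * (1 + γ ^ 2 * L ^ 2)) = ((1 - γ * (ρ + L) - η * (1 - η / 2) * γ ^ 2 * L ^ 2)
        - α * (8 * γ * (1 + γ ^ 2 * L ^ 2))) / (2 * γ) := by
    field_simp; ring
  rw [e]
  exact div_nonneg (by linarith) (by positivity)

lemma limeal_dual_coeff_le {γ η α : ℝ} (hγ : 0 < γ) (hη : 0 < η)
    (hα : α ≤ 1 / (16 * γ) * (2 / η - 1)) :
    2 * (γ * η / 4 * (1 - η / 2)) * (γ⁻¹) ^ 2 + 4 * α * η ^ 2 ≤ η * (2 - η) / (2 * γ) := by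
  have e : 1 / (16 * γ) * (2 / η - 1) = (2 - η) / (16 * γ * η) := by field_simp
  rw [e, le_div_iff₀ (by positivity)] at hα
  rw [← sub_nonneg]
  have e' : η * (2 - η) / (2 * γ) - (2 * (γ * η / 4 * (1 - η / 2)) * (γ⁻¹) ^ 2
      + 4 * α * η ^ 2) = η * ((2 - η) - α * (16 * γ * η)) / (4 * γ) := by
    field_simp; ring
  rw [e']
  exact div_nonneg (mul_nonneg hη.le (by linarith)) (by positivity)

noncomputable def limealSubproblem {n m : ℕ} (h g : EuclideanSpace ℝ (Fin n) → ℝ)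
    (h' : EuclideanSpace ℝ (Fin n) → EuclideanSpace ℝ (Fin n)) (A : Matrix (Fin m) (Fin n) ℝ)
    (b : EuclideanSpace ℝ (Fin m)) (γ β : ℝ) (x z : EuclideanSpace ℝ (Fin n))
    (lam : EuclideanSpace ℝ (Fin m)) (y : EuclideanSpace ℝ (Fin n)) : ℝ :=
  h x + ⟪h' x, y - x⟫ + g y + ⟪lam, Matrix.toEuclideanLin A y - b⟫
    + β / 2 * ‖Matrix.toEuclideanLin A y - b‖ ^ 2 + 1 / (2 * γ) * ‖y - z‖ ^ 2

-- `k - 1` truncates at `k = 0`; only `k ≥ 1` is ever used.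
noncomputable def limealLyapunov {n m : ℕ} (f : EuclideanSpace ℝ (Fin n) → ℝ)
    (A : Matrix (Fin m) (Fin n) ℝ) (b : EuclideanSpace ℝ (Fin m)) (γ L α : ℝ) (β : ℕ → ℝ)
    (x z : ℕ → EuclideanSpace ℝ (Fin n)) (lam : ℕ → EuclideanSpace ℝ (Fin m)) (k : ℕ) : ℝ :=
  Pfun f A b γ (β k) (x k) (z k) (lam k)
    + 4 * α * (γ ^ 2 * L ^ 2 * ‖x k - x (k - 1)‖ ^ 2 + ‖z k - z (k - 1)‖ ^ 2)

section LiMEAL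

variable {n m : ℕ} {A : Matrix (Fin m) (Fin n) ℝ} {b : EuclideanSpace ℝ (Fin m)}

theorem Pfun_dual_update (f : EuclideanSpace ℝ (Fin n) → ℝ) (γ η β β' : ℝ)
    (x z : EuclideanSpace ℝ (Fin n)) (lam : EuclideanSpace ℝ (Fin m)) :
    Pfun f A b γ β' x (z - η • (z - x)) (lam + β • (Matrix.toEuclideanLin A x - b))
      = Pfun f A b γ β x z lam + (β + β') / 2 * ‖Matrix.toEuclideanLin A x - b‖ ^ 2
        - η * (2 - η) / (2 * γ) * ‖x - z‖ ^ 2 := by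
  have hz : x - (z - η • (z - x)) = (1 - η) • (x - z) := by module
  simp only [Pfun, hz, norm_smul, Real.norm_eq_abs, mul_pow, sq_abs, inner_add_left,
    real_inner_smul_left, real_inner_self_eq_norm_sq]
  ring

theorem Pfun_le_sub_of_isMin_linearized {h g : EuclideanSpace ℝ (Fin n) → ℝ}
    {h' : EuclideanSpace ℝ (Fin n) → EuclideanSpace ℝ (Fin n)} {ρ L γ β : ℝ}
    (hh' : ∀ x, HasGradientAt h (h' x) x) (hL : ∀ x y, ‖h' x - h' y‖ ≤ L * ‖x - y‖)
    (hg : ConvexOn ℝ univ fun x ↦ g x + ρ / 2 * ‖x‖ ^ 2) (hβ : 0 ≤ β)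
    {x z x₁ : EuclideanSpace ℝ (Fin n)} {lam : EuclideanSpace ℝ (Fin m)}
    (hmin : IsMinOn (limealSubproblem h g h' A b γ β x z lam) univ x₁) :
    Pfun (fun a ↦ h a + g a) A b γ β x₁ z lam
      ≤ Pfun (fun a ↦ h a + g a) A b γ β x z lam - (1 / γ - ρ - L) / 2 * ‖x₁ - x‖ ^ 2 := by
  have hsc := (strongConvexOn_linearized_subproblem hg (Matrix.toEuclideanLin A) b (h x) (h' x)
    x z lam hβ γ).add_mul_norm_sub_sq_le_of_isMinOn hmin x
  have hdesc := descent_lemma hh' hL x x₁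
  rw [sub_self, inner_zero_right, norm_sub_rev x x₁] at hsc
  simp only [Pfun]
  linarith

theorem Pfun_limeal_step_le {h g : EuclideanSpace ℝ (Fin n) → ℝ}
    {h' : EuclideanSpace ℝ (Fin n) → EuclideanSpace ℝ (Fin n)} {ρ L γ β : ℝ}
    (hh' : ∀ x, HasGradientAt h (h' x) x) (hL : ∀ x y, ‖h' x - h' y‖ ≤ L * ‖x - y‖)
    (hg : ConvexOn ℝ univ fun x ↦ g x + ρ / 2 * ‖x‖ ^ 2) (hβ : 0 ≤ β)
    {x z x₁ : EuclideanSpace ℝ (Fin n)} {lam : EuclideanSpace ℝ (Fin m)}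
    (hmin : IsMinOn (limealSubproblem h g h' A b γ β x z lam) univ x₁)
    (η β' : ℝ) :
    Pfun (fun a ↦ h a + g a) A b γ β' x₁ (z - η • (z - x₁))
        (lam + β • (Matrix.toEuclideanLin A x₁ - b))
      ≤ Pfun (fun a ↦ h a + g a) A b γ β x z lam - (1 / γ - ρ - L) / 2 * ‖x₁ - x‖ ^ 2
        + (β + β') / 2 * ‖Matrix.toEuclideanLin A x₁ - b‖ ^ 2
        - η * (2 - η) / (2 * γ) * ‖x₁ - z‖ ^ 2 := by
  rw [Pfun_dual_update]
  linarith [Pfun_le_sub_of_isMin_linearized hh' hL hg hβ hmin]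

theorem limeal_multiplier_sq_le {h' prox : EuclideanSpace ℝ (Fin n) → EuclideanSpace ℝ (Fin n)}
    {L γ σ M : ℝ} {β : ℕ → ℝ} {x z : ℕ → EuclideanSpace ℝ (Fin n)}
    {lam : ℕ → EuclideanSpace ℝ (Fin m)} (hγ : 0 < γ) (hL : ∀ x y, ‖h' x - h' y‖ ≤ L * ‖x - y‖)
    (hbnd : ∀ w, ‖γ⁻¹ • (w - prox w)‖ ≤ M)
    (hb : b ∈ LinearMap.range (Matrix.toEuclideanLin A))
    (hσA : ∀ v ∈ LinearMap.range (Matrix.toEuclideanLin A),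
      σ * ‖v‖ ^ 2 ≤ ‖Matrix.toEuclideanLin A.transpose v‖ ^ 2)
    (hlam : ∀ k, lam (k + 1) = lam k + β k • (Matrix.toEuclideanLin A (x (k + 1)) - b))
    (hprox : ∀ k, x (k + 1)
        = prox (z k - γ • (h' (x k) + Matrix.toEuclideanLin A.transpose (lam (k + 1)))))
    (k : ℕ) :
    γ ^ 2 * (σ * ‖lam (k + 1 + 1) - lam (k + 1)‖ ^ 2)
      ≤ 4 * ‖z (k + 1) - z k‖ ^ 2 + 4 * ‖x (k + 1 + 1) - x (k + 1)‖ ^ 2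
        + 4 * (γ ^ 2 * L ^ 2 * ‖x (k + 1) - x k‖ ^ 2) + 16 * γ ^ 2 * M ^ 2 := by
  have hrange : lam (k + 1 + 1) - lam (k + 1) ∈ LinearMap.range (Matrix.toEuclideanLin A) := by
    rw [hlam, add_sub_cancel_left]
    exact Submodule.smul_mem _ _ (Submodule.sub_mem _ (LinearMap.mem_range_self _ _) hb)
  exact (mul_le_mul_of_nonneg_left (hσA _ hrange) (sq_nonneg γ)).trans
    (sq_mul_norm_map_sub_sq_le_of_eq_prox hγ hbnd hL (hprox k) (hprox (k + 1)))

theorem limealLyapunov_succ_le {h g : EuclideanSpace ℝ (Fin n) → ℝ}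
    {h' prox : EuclideanSpace ℝ (Fin n) → EuclideanSpace ℝ (Fin n)} {ρ L γ η σ α M : ℝ}
    {β : ℕ → ℝ} {x z : ℕ → EuclideanSpace ℝ (Fin n)} {lam : ℕ → EuclideanSpace ℝ (Fin m)}
    (hh' : ∀ x, HasGradientAt h (h' x) x) (hL : ∀ x y, ‖h' x - h' y‖ ≤ L * ‖x - y‖)
    (hg : ConvexOn ℝ univ fun x ↦ g x + ρ / 2 * ‖x‖ ^ 2)
    (hγ : 0 < γ) (hη0 : 0 < η) (hη2 : η < 2)
    (hbnd : ∀ w, ‖γ⁻¹ • (w - prox w)‖ ≤ M)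
    (hb : b ∈ LinearMap.range (Matrix.toEuclideanLin A))
    (hσA : ∀ v ∈ LinearMap.range (Matrix.toEuclideanLin A),
      σ * ‖v‖ ^ 2 ≤ ‖Matrix.toEuclideanLin A.transpose v‖ ^ 2)
    (hβ : ∀ k, 0 < β k)
    (hαβ : ∀ k, β k + β (k + 1) + γ * η * (1 - η / 2) = α * (2 * (γ ^ 2 * σ) * β k ^ 2))
    (hα0 : 0 ≤ α)
    (hα₁ : α ≤ (1 - γ * (ρ + L) - η * (1 - η / 2) * γ ^ 2 * L ^ 2)
      / (8 * γ * (1 + γ ^ 2 * L ^ 2)))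
    (hα₂ : α ≤ 1 / (16 * γ) * (2 / η - 1))
    (hxmin : ∀ k, IsMinOn (limealSubproblem h g h' A b γ (β k) (x k) (z k) (lam k)) univ
      (x (k + 1)))
    (hz : ∀ k, z (k + 1) = z k - η • (z k - x (k + 1)))
    (hlam : ∀ k, lam (k + 1) = lam k + β k • (Matrix.toEuclideanLin A (x (k + 1)) - b))
    (hprox : ∀ k, x (k + 1)
        = prox (z k - γ • (h' (x k) + Matrix.toEuclideanLin A.transpose (lam (k + 1)))))
    {k : ℕ} (hk : 1 ≤ k) :
    γ * η / 4 * (1 - η / 2) * (‖γ⁻¹ • (z k - x (k + 1)) + h' (x (k + 1)) - h' (x k)‖ ^ 2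
        + (β k ^ 2)⁻¹ * ‖lam (k + 1) - lam k‖ ^ 2)
      + limealLyapunov (fun a ↦ h a + g a) A b γ L α β x z lam (k + 1)
      ≤ limealLyapunov (fun a ↦ h a + g a) A b γ L α β x z lam k + 16 * γ ^ 2 * M ^ 2 * α := by
  obtain ⟨k, rfl⟩ := Nat.exists_eq_add_of_le' hk
  set r := Matrix.toEuclideanLin A (x (k + 1 + 1)) - b
  have hc : 0 ≤ γ * η / 4 * (1 - η / 2) := mul_nonneg (by positivity) (by linarith)
  have hP := Pfun_limeal_step_le hh' hL hg (hβ (k + 1)).le (hxmin (k + 1)) η (β (k + 1 + 1))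
  rw [← hz, ← hlam] at hP
  have hΔlam_sq : ‖lam (k + 1 + 1) - lam (k + 1)‖ ^ 2 = β (k + 1) ^ 2 * ‖r‖ ^ 2 := by
    rw [hlam, add_sub_cancel_left, norm_smul, Real.norm_eq_abs, mul_pow, sq_abs]
  have hΔz_sq : ‖z (k + 1 + 1) - z (k + 1)‖ ^ 2 = η ^ 2 * ‖x (k + 1 + 1) - z (k + 1)‖ ^ 2 := by
    rw [show z (k + 1 + 1) - z (k + 1) = η • (x (k + 1 + 1) - z (k + 1)) by rw [hz]; module,
      norm_smul, Real.norm_eq_abs, mul_pow, sq_abs]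
  have hdual := mul_le_mul_of_nonneg_left
    (limeal_multiplier_sq_le hγ hL hbnd hb hσA hlam hprox k) hα0
  have hres := mul_le_mul_of_nonneg_left
    (norm_inv_smul_sub_add_sub_sq_le hL γ (x (k + 1)) (x (k + 1 + 1)) (z (k + 1))) hc
  have hprimal := mul_le_mul_of_nonneg_right (limeal_primal_coeff_le (ρ := ρ) hγ hα₁)
    (sq_nonneg ‖x (k + 1 + 1) - x (k + 1)‖)
  have hdualc := mul_le_mul_of_nonneg_right (limeal_dual_coeff_le hγ hη0 hα₂)
    (sq_nonneg ‖x (k + 1 + 1) - z (k + 1)‖)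
  -- the choice of `β` turns the penalty increase `(β k + β (k + 1)) / 2 * ‖r‖ ^ 2` into
  -- `α γ² σ ‖Δλ‖²`, which `hdual` controls
  have hpen := congrArg (· * ‖r‖ ^ 2) (hαβ (k + 1))
  have hpen_nonneg := mul_nonneg hc (sq_nonneg ‖r‖)
  have hβne : β (k + 1) ^ 2 ≠ 0 := (pow_pos (hβ (k + 1)) 2).ne'
  simp only [limealLyapunov, Nat.add_sub_cancel, hΔlam_sq, hΔz_sq, inv_mul_cancel_left₀ hβne]
  rw [hΔlam_sq] at hdual
  linarith

end LiMEAL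

theorem stmt_16_general (n m : ℕ) (A : Matrix (Fin m) (Fin n) ℝ) (b : EuclideanSpace ℝ (Fin m))
    (h : EuclideanSpace ℝ (Fin n) → ℝ)
    (h' : EuclideanSpace ℝ (Fin n) → EuclideanSpace ℝ (Fin n))
    (g : EuclideanSpace ℝ (Fin n) → ℝ) (ρg γ η Lh Lghat σ αbar Estar : ℝ)
    (K : ℕ) (hK : 1 ≤ K)
    (hη0 : 0 < η) (hη2 : η < 2)
    (hγ0 : 0 < γ)
    (hσ : 0 < σ)
    (hh' : ∀ x, HasGradientAt h (h' x) x)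
    (hLh : ∀ x y, ‖h' x - h' y‖ ≤ Lh * ‖x - y‖)
    (hwc : ConvexOn ℝ Set.univ fun x => g x + ρg / 2 * ‖x‖ ^ 2)
    (prox : EuclideanSpace ℝ (Fin n) → EuclideanSpace ℝ (Fin n))
    (hbnd : ∀ w, ‖γ⁻¹ • (w - prox w)‖ ≤ Lghat)
    (hb : b ∈ LinearMap.range (Matrix.toEuclideanLin A))
    (hσA : ∀ v ∈ LinearMap.range (Matrix.toEuclideanLin A),
      σ * ‖v‖ ^ 2 ≤ ‖Matrix.toEuclideanLin A.transpose v‖ ^ 2)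
    (β : ℕ → ℝ) (hβ : ∀ k, 0 < β k)
    (hαk : ∀ k, (β k + β (k + 1) + γ * η * (1 - η / 2)) / (2 * (γ ^ 2 * σ) * β k ^ 2)
        = αbar / K)
    (hαbar0 : 0 < αbar)
    (hαbar : αbar ≤ min
        ((1 - γ * (ρg + Lh) - η * (1 - η / 2) * γ ^ 2 * Lh ^ 2)
          / (8 * γ * (1 + γ ^ 2 * Lh ^ 2)))
        (1 / (16 * γ) * (2 / η - 1)))
    (x z : ℕ → EuclideanSpace ℝ (Fin n)) (lam : ℕ → EuclideanSpace ℝ (Fin m))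
    (hxmin : ∀ k x',
      h (x k) + ⟪h' (x k), x (k + 1) - x k⟫ + g (x (k + 1))
          + ⟪lam k, Matrix.toEuclideanLin A (x (k + 1)) - b⟫
          + β k / 2 * ‖Matrix.toEuclideanLin A (x (k + 1)) - b‖ ^ 2
          + 1 / (2 * γ) * ‖x (k + 1) - z k‖ ^ 2
        ≤ h (x k) + ⟪h' (x k), x' - x k⟫ + g x'
          + ⟪lam k, Matrix.toEuclideanLin A x' - b⟫
          + β k / 2 * ‖Matrix.toEuclideanLin A x' - b‖ ^ 2
          + 1 / (2 * γ) * ‖x' - z k‖ ^ 2)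
    (hz : ∀ k, z (k + 1) = z k - η • (z k - x (k + 1)))
    (hlam : ∀ k, lam (k + 1) = lam k + β k • (Matrix.toEuclideanLin A (x (k + 1)) - b))
    (hprox : ∀ k, x (k + 1)
        = prox (z k - γ • (h' (x k) + Matrix.toEuclideanLin A.transpose (lam (k + 1)))))
    (hEt : ∀ k, 1 ≤ k → k ≤ K + 1 →
      Estar ≤ Pfun (fun a => h a + g a) A b γ (β k) (x k) (z k) (lam k)
          + 4 * (αbar / K)
            * (γ ^ 2 * Lh ^ 2 * ‖x k - x (k - 1)‖ ^ 2 + ‖z k - z (k - 1)‖ ^ 2)) :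
    sInf ((fun t => Real.sqrt
          (‖γ⁻¹ • (z t - x (t + 1)) + h' (x (t + 1)) - h' (x t)‖ ^ 2
            + (β t ^ 2)⁻¹ * ‖lam (t + 1) - lam t‖ ^ 2)) '' Set.Icc 1 K)
      ≤ Real.sqrt ((Pfun (fun a => h a + g a) A b γ (β 1) (x 1) (z 1) (lam 1)
            + 4 * (αbar / K)
              * (γ ^ 2 * Lh ^ 2 * ‖x 1 - x 0‖ ^ 2 + ‖z 1 - z 0‖ ^ 2) - Estar
            + 16 * γ ^ 2 * Lghat ^ 2 * αbar) / (γ * η / 4 * (1 - η / 2)))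
        / Real.sqrt K := by
  set α := αbar / K
  have hKpos : (0 : ℝ) < K := by exact_mod_cast hK
  have hα_le : α ≤ αbar := div_le_self hαbar0.le (by exact_mod_cast hK)
  have hαβ : ∀ k, β k + β (k + 1) + γ * η * (1 - η / 2) = α * (2 * (γ ^ 2 * σ) * β k ^ 2) :=
    fun k ↦ (div_eq_iff (by have := hβ k; positivity)).1 (hαk k)
  have hstep := fun k (hk : k ∈ Set.Icc 1 K) ↦ limealLyapunov_succ_le hh' hLh hwc hγ0 hη0 hη2
    hbnd hb hσA hβ hαβ (by positivity) (hα_le.trans (hαbar.trans (min_le_left _ _)))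
    (hα_le.trans (hαbar.trans (min_le_right _ _))) (fun k y _ ↦ hxmin k y) hz hlam hprox hk.1
  obtain ⟨t, ht, hKt⟩ :=
    exists_mem_Icc_mul_le_of_forall_add_le hK hstep (hEt (K + 1) (by omega) le_rfl)
  rw [show (K : ℝ) * (16 * γ ^ 2 * Lghat ^ 2 * α) = 16 * γ ^ 2 * Lghat ^ 2 * αbar by
    rw [mul_comm, mul_assoc, div_mul_cancel₀ _ hKpos.ne']] at hKt
  have hc : 0 < γ * η / 4 * (1 - η / 2) := mul_pos (by positivity) (by linarith)
  refine (csInf_le ?_ (Set.mem_image_of_mem _ ht)).trans ?_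
  · exact ⟨0, by rintro _ ⟨s, -, rfl⟩; exact Real.sqrt_nonneg _⟩
  rw [← Real.sqrt_div' _ hKpos.le]
  refine Real.sqrt_le_sqrt ?_
  rw [le_div_iff₀ hKpos, le_div_iff₀ hc]
  exact le_of_eq_of_le (by ring) hKt

/-- Theorem 3(b): `O(1/√K)` bound for LiMEAL under the implicit bounded subgradient
assumption. -/
theorem stmt_16 (n m : ℕ) (A : Matrix (Fin m) (Fin n) ℝ) (b : EuclideanSpace ℝ (Fin m))
    (h : EuclideanSpace ℝ (Fin n) → ℝ)
    (h' : EuclideanSpace ℝ (Fin n) → EuclideanSpace ℝ (Fin n))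
    (g : EuclideanSpace ℝ (Fin n) → ℝ) (ρg γ η Lh Lghat σ αbar Estar : ℝ)
    (K : ℕ) (hK : 1 ≤ K)
    (hρg : 0 < ρg) (hη0 : 0 < η) (hη2 : η < 2)
    (hγ0 : 0 < γ)
    (hγ : γ < 2 / ((ρg + Lh) * (1 + Real.sqrt (1 + 2 * (2 - η) * η * Lh ^ 2 / (ρg + Lh) ^ 2))))
    (hLg : 0 < Lghat) (hσ : 0 < σ)
    (hh' : ∀ x, HasGradientAt h (h' x) x)
    (hLh : ∀ x y, ‖h' x - h' y‖ ≤ Lh * ‖x - y‖)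
    (hlsc : LowerSemicontinuous g)
    (hwc : ConvexOn ℝ Set.univ fun x => g x + ρg / 2 * ‖x‖ ^ 2)
    (prox : EuclideanSpace ℝ (Fin n) → EuclideanSpace ℝ (Fin n))
    (hproxmin : ∀ w x, g (prox w) + 1 / (2 * γ) * ‖prox w - w‖ ^ 2
        ≤ g x + 1 / (2 * γ) * ‖x - w‖ ^ 2)
    (hproxuniq : ∀ w x, (∀ y, g x + 1 / (2 * γ) * ‖x - w‖ ^ 2
        ≤ g y + 1 / (2 * γ) * ‖y - w‖ ^ 2) → x = prox w)
    (hbnd : ∀ w, ‖γ⁻¹ • (w - prox w)‖ ≤ Lghat)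
    (hb : b ∈ LinearMap.range (Matrix.toEuclideanLin A))
    (hσA : ∀ v ∈ LinearMap.range (Matrix.toEuclideanLin A),
      σ * ‖v‖ ^ 2 ≤ ‖Matrix.toEuclideanLin A.transpose v‖ ^ 2)
    (β : ℕ → ℝ) (hβ : ∀ k, 0 < β k)
    (hαk : ∀ k, (β k + β (k + 1) + γ * η * (1 - η / 2)) / (2 * (γ ^ 2 * σ) * β k ^ 2)
        = αbar / K)
    (hαbar0 : 0 < αbar)
    (hαbar : αbar ≤ min
        ((1 - γ * (ρg + Lh) - η * (1 - η / 2) * γ ^ 2 * Lh ^ 2)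
          / (8 * γ * (1 + γ ^ 2 * Lh ^ 2)))
        (1 / (16 * γ) * (2 / η - 1)))
    (x z : ℕ → EuclideanSpace ℝ (Fin n)) (lam : ℕ → EuclideanSpace ℝ (Fin m))
    (hxmin : ∀ k x',
      h (x k) + ⟪h' (x k), x (k + 1) - x k⟫ + g (x (k + 1))
          + ⟪lam k, Matrix.toEuclideanLin A (x (k + 1)) - b⟫
          + β k / 2 * ‖Matrix.toEuclideanLin A (x (k + 1)) - b‖ ^ 2
          + 1 / (2 * γ) * ‖x (k + 1) - z k‖ ^ 2
        ≤ h (x k) + ⟪h' (x k), x' - x k⟫ + g x'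
          + ⟪lam k, Matrix.toEuclideanLin A x' - b⟫
          + β k / 2 * ‖Matrix.toEuclideanLin A x' - b‖ ^ 2
          + 1 / (2 * γ) * ‖x' - z k‖ ^ 2)
    (hz : ∀ k, z (k + 1) = z k - η • (z k - x (k + 1)))
    (hlam : ∀ k, lam (k + 1) = lam k + β k • (Matrix.toEuclideanLin A (x (k + 1)) - b))
    (hprox : ∀ k, x (k + 1)
        = prox (z k - γ • (h' (x k) + Matrix.toEuclideanLin A.transpose (lam (k + 1)))))
    (hEt : ∀ k, 1 ≤ k → k ≤ K + 1 →
      Estar ≤ Pfun (fun a => h a + g a) A b γ (β k) (x k) (z k) (lam k)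
          + 4 * (αbar / K)
            * (γ ^ 2 * Lh ^ 2 * ‖x k - x (k - 1)‖ ^ 2 + ‖z k - z (k - 1)‖ ^ 2)) :
    sInf ((fun t => Real.sqrt
          (‖γ⁻¹ • (z t - x (t + 1)) + h' (x (t + 1)) - h' (x t)‖ ^ 2
            + (β t ^ 2)⁻¹ * ‖lam (t + 1) - lam t‖ ^ 2)) '' Set.Icc 1 K)
      ≤ Real.sqrt ((Pfun (fun a => h a + g a) A b γ (β 1) (x 1) (z 1) (lam 1)
            + 4 * (αbar / K)
              * (γ ^ 2 * Lh ^ 2 * ‖x 1 - x 0‖ ^ 2 + ‖z 1 - z 0‖ ^ 2) - Estar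
            + 16 * γ ^ 2 * Lghat ^ 2 * αbar) / (γ * η / 4 * (1 - η / 2)))
        / Real.sqrt K :=
  stmt_16_general n m A b h h' g ρg γ η Lh Lghat σ αbar Estar K hK hη0 hη2 hγ0 hσ hh' hLh hwc prox
    hbnd hb hσA β hβ hαk hαbar0 hαbar x z lam hxmin hz hlam hprox hEt
end

section
/- Let f : ℝ^n → ℝ be lower semicontinuous and ρ-weakly convex with the implicit Lipschitz subgradient property with constant L_f > 0, let γ ∈ (0, 1/ρ), η ∈ (0, 2), and let β > 0 be a fixed penalty parameter. Assume b lies in the column space of A and σ̃ > 0 satisfies ‖Aᵀv‖² ≥ σ̃‖v‖² for every v in the column space of A; set c_{γ,A} := γ²σ̃, α := (2β + γη(1 − η/2))/(2c_{γ,A}β²), and a := γη(2 − η)/(4β). Let (x^k, z^k, λ^k) be MEAL iterates with constant penalty β_k = β and step size η, and define P_meal^k := P_β(x^k, z^k, λ^k) + 3α‖z^k − z^{k−1}‖² for k ≥ 1. Then for every k ≥ 1: P_meal^k − P_meal^{k+1} ≥ ((1 − ργ)/(2γ) − 2α(γL_f + 1)²)‖x^{k+1} − x^k‖² + ((1/(2γ))(2/η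 − 1) − 3α)‖z^{k+1} − z^k‖² + α‖z^k − z^{k−1}‖² + (a/β)‖λ^{k+1} − λ^k‖². -/
/-!
In `x`, `P_β(·, z, λ)` is `(1/γ − ρ)`-strongly convex, so the primal step gains
`(1/γ − ρ)/2 ‖x^{k+1} − x^k‖²`; the centre step gains `(1/(2γ))(2/η − 1)‖z^{k+1} − z^k‖²`, and the
dual step loses exactly `‖λ^{k+1} − λ^k‖²/β`. To pay for that loss: `λ^{k+1} − λ^k` lies in the
range of `A`, so `σ̃‖λ^{k+1} − λ^k‖² ≤ ‖Aᵀ(λ^{k+1} − λ^k)‖²`, and prox optimality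
`Aᵀλ^{k+1} = γ⁻¹(z^k − x^{k+1}) − ∇M_{γ,f}(z^k − γAᵀλ^{k+1})` with the implicit Lipschitz property
bounds `γ‖Aᵀ(λ^{k+1} − λ^k)‖` by `‖z^k − z^{k−1}‖ + (γL_f + 1)‖x^{k+1} − x^k‖`. The term
`3α‖z^k − z^{k−1}‖²` in the Lyapunov function absorbs the `‖z^k − z^{k−1}‖²` this produces.
-/

open scoped RealInnerProductSpace
open Set Filter Topology

section StrongConvexity

variable {E : Type*} [NormedAddCommGroup E] [NormedSpace ℝ E] {s : Set E} {m n : ℝ} {f g : E → ℝ}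

lemma StrongConvexOn.add (hf : StrongConvexOn s m f) (hg : StrongConvexOn s n g) :
    StrongConvexOn s (m + n) (f + g) := by
  show UniformConvexOn s _ (f + g)
  convert UniformConvexOn.add hf hg using 1
  funext r
  simp only [Pi.add_apply]
  ring

lemma StrongConvexOn.half_mul_norm_sub_sq_le_of_isMinOn {p q : E} (hg : StrongConvexOn s m g)
    (hp : IsMinOn g s p) (hps : p ∈ s) (hq : q ∈ s) :
    m / 2 * ‖q - p‖ ^ 2 ≤ g q - g p := by
  have hseg : ∀ t ∈ Ioo (0 : ℝ) 1, (1 - t) * (m / 2 * ‖q - p‖ ^ 2) ≤ g q - g p := by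
    rintro t ⟨ht0, ht1⟩
    have hconv := hg.2 hps hq (sub_nonneg.2 ht1.le) ht0.le (sub_add_cancel 1 t)
    have hmin : g p ≤ g _ := hp (hg.1 hps hq (sub_nonneg.2 ht1.le) ht0.le (sub_add_cancel 1 t))
    rw [norm_sub_rev] at hconv
    simp only [smul_eq_mul] at hconv
    have : t * ((1 - t) * (m / 2 * ‖q - p‖ ^ 2)) ≤ t * (g q - g p) := by linarith
    exact le_of_mul_le_mul_left this ht0
  have hlim : Tendsto (fun t : ℝ => (1 - t) * (m / 2 * ‖q - p‖ ^ 2)) (𝓝[>] 0)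
      (𝓝 ((1 - 0) * (m / 2 * ‖q - p‖ ^ 2))) :=
    ((continuous_const.sub continuous_id).mul continuous_const).tendsto 0 |>.mono_left
      nhdsWithin_le_nhds
  simpa using le_of_tendsto hlim (eventually_of_mem (Ioo_mem_nhdsGT one_pos) hseg)

end StrongConvexity

lemma smul_add_smul_sub {M : Type*} [AddCommGroup M] [Module ℝ M] {a b : ℝ} (hab : a + b = 1)
    (u v w : M) :
    a • u + b • v - w = a • (u - w) + b • (v - w) := by
  obtain rfl := eq_sub_of_add_eq' hab
  module

section InnerProductSpace

variable {E F : Type*} [NormedAddCommGroup E] [InnerProductSpace ℝ E] [NormedAddCommGroup F]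
  [InnerProductSpace ℝ F]

lemma norm_smul_add_smul_sq {a b : ℝ} (hab : a + b = 1) (u v : E) :
    ‖a • u + b • v‖ ^ 2 = a * ‖u‖ ^ 2 + b * ‖v‖ ^ 2 - a * b * ‖u - v‖ ^ 2 := by
  obtain rfl := eq_sub_of_add_eq' hab
  rw [norm_add_sq_real, norm_sub_sq_real, norm_smul, norm_smul, real_inner_smul_left,
    real_inner_smul_right, mul_pow, mul_pow, Real.norm_eq_abs, Real.norm_eq_abs, sq_abs, sq_abs]
  ring

lemma strongConvexOn_neg_iff_convexOn_add {s : Set E} {f : E → ℝ} {ρ : ℝ} :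
    StrongConvexOn s (-ρ) f ↔ ConvexOn ℝ s fun x => f x + ρ / 2 * ‖x‖ ^ 2 := by
  rw [strongConvexOn_iff_convex]
  simp only [neg_div, neg_mul, sub_neg_eq_add]

lemma strongConvexOn_univ_half_mul_norm_sub_sq (c : ℝ) (z : E) :
    StrongConvexOn univ c fun x => c / 2 * ‖x - z‖ ^ 2 := by
  refine ⟨convex_univ, fun x _ y _ a b _ _ hab => le_of_eq ?_⟩
  dsimp only
  rw [smul_add_smul_sub hab, norm_smul_add_smul_sq hab, sub_sub_sub_cancel_right, smul_eq_mul,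
    smul_eq_mul]
  ring

lemma convexOn_univ_inner_add_half_mul_norm_sq_comp (T : E →ₗ[ℝ] F) (b lam : F) {β : ℝ}
    (hβ : 0 ≤ β) :
    ConvexOn ℝ univ fun x => ⟪lam, T x - b⟫ + β / 2 * ‖T x - b‖ ^ 2 := by
  refine ⟨convex_univ, fun x _ y _ a c ha hc hac => ?_⟩
  have hT : T (a • x + c • y) - b = a • (T x - b) + c • (T y - b) := by
    rw [map_add, map_smul, map_smul, smul_add_smul_sub hac]
  dsimp only
  rw [hT, inner_add_right, real_inner_smul_right, real_inner_smul_right,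
    norm_smul_add_smul_sq hac, smul_eq_mul, smul_eq_mul]
  nlinarith [mul_nonneg (mul_nonneg ha hc) (mul_nonneg hβ (sq_nonneg ‖T x - b - (T y - b)‖))]

end InnerProductSpace

section ProxGradient

variable {E F : Type*} [NormedAddCommGroup E] [NormedSpace ℝ E] [NormedAddCommGroup F]
  [NormedSpace ℝ F]

lemma norm_map_sub_le_of_eq_prox (S : F →ₗ[ℝ] E) (prox : E → E) {γ L : ℝ} (hγ : 0 < γ)
    (hlip : ∀ w w', ‖γ⁻¹ • (w - prox w) - γ⁻¹ • (w' - prox w')‖ ≤ L * ‖prox w - prox w'‖)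
    {x x' z z' : E} {lam lam' : F} (hx : x = prox (z - γ • S lam))
    (hx' : x' = prox (z' - γ • S lam')) :
    ‖S (lam' - lam)‖ ≤ γ⁻¹ * ‖z' - z‖ + (γ⁻¹ + L) * ‖x' - x‖ := by
  set w := z - γ • S lam
  set w' := z' - γ • S lam'
  have hS : S (lam' - lam)
      = γ⁻¹ • ((z' - z) - (x' - x)) - (γ⁻¹ • (w' - prox w') - γ⁻¹ • (w - prox w)) := by
    simp only [w, w', ← hx, ← hx', smul_sub, inv_smul_smul₀ hγ.ne', map_sub]
    abel
  calc ‖S (lam' - lam)‖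
      ≤ ‖γ⁻¹ • ((z' - z) - (x' - x))‖ + ‖γ⁻¹ • (w' - prox w') - γ⁻¹ • (w - prox w)‖ :=
        hS ▸ norm_sub_le _ _
    _ ≤ γ⁻¹ * (‖z' - z‖ + ‖x' - x‖) + L * ‖x' - x‖ := by
        rw [norm_smul, Real.norm_of_nonneg (inv_nonneg.2 hγ.le)]
        gcongr
        · exact norm_sub_le _ _
        · simpa only [← hx, ← hx'] using hlip w' w
    _ = γ⁻¹ * ‖z' - z‖ + (γ⁻¹ + L) * ‖x' - x‖ := by ring

lemma sq_norm_sub_le_of_eq_prox (S : F →ₗ[ℝ] E) (prox : E → E) {γ L σ : ℝ} (hγ : 0 < γ)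
    (hlip : ∀ w w', ‖γ⁻¹ • (w - prox w) - γ⁻¹ • (w' - prox w')‖ ≤ L * ‖prox w - prox w'‖)
    {x x' z z' : E} {lam lam' : F} (hx : x = prox (z - γ • S lam))
    (hx' : x' = prox (z' - γ • S lam'))
    (hσ : σ * ‖lam' - lam‖ ^ 2 ≤ ‖S (lam' - lam)‖ ^ 2) :
    σ * γ ^ 2 * ‖lam' - lam‖ ^ 2 ≤ 2 * ‖z' - z‖ ^ 2 + 2 * (γ * L + 1) ^ 2 * ‖x' - x‖ ^ 2 := by
  have hγS : γ * ‖S (lam' - lam)‖ ≤ ‖z' - z‖ + (γ * L + 1) * ‖x' - x‖ := by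
    calc γ * ‖S (lam' - lam)‖ ≤ γ * (γ⁻¹ * ‖z' - z‖ + (γ⁻¹ + L) * ‖x' - x‖) := by
          gcongr; exact norm_map_sub_le_of_eq_prox S prox hγ hlip hx hx'
      _ = ‖z' - z‖ + (γ * L + 1) * ‖x' - x‖ := by field_simp; ring
  calc σ * γ ^ 2 * ‖lam' - lam‖ ^ 2 = γ ^ 2 * (σ * ‖lam' - lam‖ ^ 2) := by ring
    _ ≤ (γ * ‖S (lam' - lam)‖) ^ 2 := by rw [mul_pow]; gcongr
    _ ≤ (‖z' - z‖ + (γ * L + 1) * ‖x' - x‖) ^ 2 := by gcongr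
    _ ≤ 2 * ‖z' - z‖ ^ 2 + 2 * (γ * L + 1) ^ 2 * ‖x' - x‖ ^ 2 := by
        nlinarith [add_sq_le (a := ‖z' - z‖) (b := (γ * L + 1) * ‖x' - x‖)]

end ProxGradient

section MEAL

variable {n m : ℕ} {f : EuclideanSpace ℝ (Fin n) → ℝ} {A : Matrix (Fin m) (Fin n) ℝ}
  {b : EuclideanSpace ℝ (Fin m)} {γ β : ℝ}

lemma strongConvexOn_Pfun {ρ : ℝ} (hwc : ConvexOn ℝ univ fun x => f x + ρ / 2 * ‖x‖ ^ 2)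
    (hβ : 0 ≤ β) (z : EuclideanSpace ℝ (Fin n)) (lam : EuclideanSpace ℝ (Fin m)) :
    StrongConvexOn univ (γ⁻¹ - ρ) fun x => Pfun f A b γ β x z lam := by
  have h := ((strongConvexOn_neg_iff_convexOn_add.2 hwc).add (strongConvexOn_zero.2
    (convexOn_univ_inner_add_half_mul_norm_sq_comp (Matrix.toEuclideanLin A) b lam hβ))).add
    (strongConvexOn_univ_half_mul_norm_sub_sq γ⁻¹ z)
  have hP : (fun x => Pfun f A b γ β x z lam) = (f + fun x =>
      ⟪lam, Matrix.toEuclideanLin A x - b⟫ + β / 2 * ‖Matrix.toEuclideanLin A x - b‖ ^ 2) +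
      fun x => γ⁻¹ / 2 * ‖x - z‖ ^ 2 := by
    funext x
    simp only [Pfun, Pi.add_apply]
    ring
  rw [hP, show γ⁻¹ - ρ = -ρ + 0 + γ⁻¹ by ring]
  exact h

lemma Pfun_update_dual (x z : EuclideanSpace ℝ (Fin n)) (lam : EuclideanSpace ℝ (Fin m)) :
    Pfun f A b γ β x z (lam + β • (Matrix.toEuclideanLin A x - b))
      = Pfun f A b γ β x z lam + β * ‖Matrix.toEuclideanLin A x - b‖ ^ 2 := by
  simp only [Pfun, inner_add_left, real_inner_smul_left, real_inner_self_eq_norm_sq]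
  ring

lemma Pfun_sub_Pfun_update_center {η : ℝ} (hη : η ≠ 0) (x z : EuclideanSpace ℝ (Fin n))
    (lam : EuclideanSpace ℝ (Fin m)) :
    Pfun f A b γ β x z lam - Pfun f A b γ β x (z - η • (z - x)) lam
      = 1 / (2 * γ) * (2 / η - 1) * ‖z - η • (z - x) - z‖ ^ 2 := by
  have hxz : x - (z - η • (z - x)) = (1 - η) • (x - z) := by module
  have hzz : z - η • (z - x) - z = η • (x - z) := by module
  simp only [Pfun, hxz, hzz, norm_smul, mul_pow, Real.norm_eq_abs, sq_abs]
  field_simp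
  ring

lemma Pfun_sub_Pfun_of_meal_step {ρ η : ℝ}
    (hwc : ConvexOn ℝ univ fun x => f x + ρ / 2 * ‖x‖ ^ 2) (hβ : 0 < β) (hη : η ≠ 0)
    {x x' z z' : EuclideanSpace ℝ (Fin n)} {lam lam' : EuclideanSpace ℝ (Fin m)}
    (hmin : ∀ y, Pfun f A b γ β x' z lam ≤ Pfun f A b γ β y z lam)
    (hz : z' = z - η • (z - x')) (hlam : lam' = lam + β • (Matrix.toEuclideanLin A x' - b)) :
    (γ⁻¹ - ρ) / 2 * ‖x' - x‖ ^ 2 - β⁻¹ * ‖lam' - lam‖ ^ 2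
        + 1 / (2 * γ) * (2 / η - 1) * ‖z' - z‖ ^ 2
      ≤ Pfun f A b γ β x z lam - Pfun f A b γ β x' z' lam' := by
  subst hz hlam
  have hprimal := (strongConvexOn_Pfun hwc hβ.le z lam).half_mul_norm_sub_sq_le_of_isMinOn
    (fun y _ => hmin y) (mem_univ x') (mem_univ x)
  have hcost : β⁻¹ * ‖lam + β • (Matrix.toEuclideanLin A x' - b) - lam‖ ^ 2
      = β * ‖Matrix.toEuclideanLin A x' - b‖ ^ 2 := by
    rw [add_sub_cancel_left, norm_smul, mul_pow, Real.norm_eq_abs, sq_abs]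
    field_simp
  have hcenter := Pfun_sub_Pfun_update_center (f := f) (A := A) (b := b) (γ := γ) (β := β) hη x'
    z (lam + β • (Matrix.toEuclideanLin A x' - b))
  rw [Pfun_update_dual] at hcenter
  rw [norm_sub_rev x] at hprimal
  linarith

end MEAL

lemma sub_mem_range_of_eq_add_smul {E F : Type*} [AddCommGroup E] [Module ℝ E] [AddCommGroup F]
    [Module ℝ F] {T : E →ₗ[ℝ] F} {b lam lam' : F} (hb : b ∈ LinearMap.range T) (β : ℝ) (x : E)
    (hlam : lam' = lam + β • (T x - b)) : lam' - lam ∈ LinearMap.range T := by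
  rw [hlam, add_sub_cancel_left]
  exact Submodule.smul_mem _ β (Submodule.sub_mem _ (LinearMap.mem_range_self T x) hb)

theorem stmt_17_general (n m : ℕ) (A : Matrix (Fin m) (Fin n) ℝ) (b : EuclideanSpace ℝ (Fin m))
    (f : EuclideanSpace ℝ (Fin n) → ℝ) (ρ γ η Lf β σ α a : ℝ)
    (hγ0 : 0 < γ) (hη0 : 0 < η) (hη2 : η < 2)
    (hβ : 0 < β) (hσ : 0 < σ)
    (hwc : ConvexOn ℝ Set.univ fun x => f x + ρ / 2 * ‖x‖ ^ 2)
    (prox : EuclideanSpace ℝ (Fin n) → EuclideanSpace ℝ (Fin n))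
    (hlip : ∀ w w', ‖γ⁻¹ • (w - prox w) - γ⁻¹ • (w' - prox w')‖
        ≤ Lf * ‖prox w - prox w'‖)
    (hb : b ∈ LinearMap.range (Matrix.toEuclideanLin A))
    (hσA : ∀ v ∈ LinearMap.range (Matrix.toEuclideanLin A),
      σ * ‖v‖ ^ 2 ≤ ‖Matrix.toEuclideanLin A.transpose v‖ ^ 2)
    (hαdef : α = (2 * β + γ * η * (1 - η / 2)) / (2 * (γ ^ 2 * σ) * β ^ 2))
    (hadef : a = γ * η * (2 - η) / (4 * β))
    (x z : ℕ → EuclideanSpace ℝ (Fin n)) (lam : ℕ → EuclideanSpace ℝ (Fin m))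
    (hxmin : ∀ k x', Pfun f A b γ β (x (k + 1)) (z k) (lam k)
        ≤ Pfun f A b γ β x' (z k) (lam k))
    (hz : ∀ k, z (k + 1) = z k - η • (z k - x (k + 1)))
    (hlam : ∀ k, lam (k + 1) = lam k + β • (Matrix.toEuclideanLin A (x (k + 1)) - b))
    (hprox : ∀ k, x (k + 1)
        = prox (z k - γ • Matrix.toEuclideanLin A.transpose (lam (k + 1)))) :
    ∀ k, 1 ≤ k →
      (Pfun f A b γ β (x k) (z k) (lam k) + 3 * α * ‖z k - z (k - 1)‖ ^ 2)
          - (Pfun f A b γ β (x (k + 1)) (z (k + 1)) (lam (k + 1))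
              + 3 * α * ‖z (k + 1) - z k‖ ^ 2)
        ≥ ((1 - ρ * γ) / (2 * γ) - 2 * α * (γ * Lf + 1) ^ 2) * ‖x (k + 1) - x k‖ ^ 2
          + (1 / (2 * γ) * (2 / η - 1) - 3 * α) * ‖z (k + 1) - z k‖ ^ 2
          + α * ‖z k - z (k - 1)‖ ^ 2
          + a / β * ‖lam (k + 1) - lam k‖ ^ 2 := by
  intro k hk
  obtain ⟨j, rfl⟩ := Nat.exists_eq_add_of_le' hk
  rw [Nat.add_sub_cancel]
  have hdescent := Pfun_sub_Pfun_of_meal_step (x := x (j + 1)) hwc hβ hη0.ne' (hxmin (j + 1))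
    (hz (j + 1)) (hlam (j + 1))
  have hdual := sq_norm_sub_le_of_eq_prox _ prox hγ0 hlip (hprox j) (hprox (j + 1))
    (hσA _ (sub_mem_range_of_eq_add_smul hb β _ (hlam (j + 1))))
  have hα : 0 ≤ α := by
    rw [hαdef]
    have : 0 < 1 - η / 2 := by linarith
    positivity
  have hαa : α * (σ * γ ^ 2) = β⁻¹ + a / β := by
    rw [hαdef, hadef]
    field_simp
    ring
  have hcoef : (1 - ρ * γ) / (2 * γ) = (γ⁻¹ - ρ) / 2 := by field_simp
  rw [ge_iff_le, hcoef]
  linear_combination hdescent + mul_le_mul_of_nonneg_left hdual hα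
    - ‖lam (j + 1 + 1) - lam (j + 1)‖ ^ 2 * hαa

/-- Sufficient-descent property of the MEAL Lyapunov function
`P_meal^k = P_β(x^k, z^k, λ^k) + 3α‖z^k − z^{k−1}‖²`. -/
theorem stmt_17 (n m : ℕ) (A : Matrix (Fin m) (Fin n) ℝ) (b : EuclideanSpace ℝ (Fin m))
    (f : EuclideanSpace ℝ (Fin n) → ℝ) (ρ γ η Lf β σ α a : ℝ)
    (hρ : 0 < ρ) (hγ0 : 0 < γ) (hγ : γ < 1 / ρ) (hη0 : 0 < η) (hη2 : η < 2)
    (hLf : 0 < Lf) (hβ : 0 < β) (hσ : 0 < σ)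
    (hlsc : LowerSemicontinuous f)
    (hwc : ConvexOn ℝ Set.univ fun x => f x + ρ / 2 * ‖x‖ ^ 2)
    (prox : EuclideanSpace ℝ (Fin n) → EuclideanSpace ℝ (Fin n))
    (hproxmin : ∀ w x, f (prox w) + 1 / (2 * γ) * ‖prox w - w‖ ^ 2
        ≤ f x + 1 / (2 * γ) * ‖x - w‖ ^ 2)
    (hproxuniq : ∀ w x, (∀ y, f x + 1 / (2 * γ) * ‖x - w‖ ^ 2
        ≤ f y + 1 / (2 * γ) * ‖y - w‖ ^ 2) → x = prox w)
    (hlip : ∀ w w', ‖γ⁻¹ • (w - prox w) - γ⁻¹ • (w' - prox w')‖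
        ≤ Lf * ‖prox w - prox w'‖)
    (hb : b ∈ LinearMap.range (Matrix.toEuclideanLin A))
    (hσA : ∀ v ∈ LinearMap.range (Matrix.toEuclideanLin A),
      σ * ‖v‖ ^ 2 ≤ ‖Matrix.toEuclideanLin A.transpose v‖ ^ 2)
    (hαdef : α = (2 * β + γ * η * (1 - η / 2)) / (2 * (γ ^ 2 * σ) * β ^ 2))
    (hadef : a = γ * η * (2 - η) / (4 * β))
    (x z : ℕ → EuclideanSpace ℝ (Fin n)) (lam : ℕ → EuclideanSpace ℝ (Fin m))
    (hxmin : ∀ k x', Pfun f A b γ β (x (k + 1)) (z k) (lam k)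
        ≤ Pfun f A b γ β x' (z k) (lam k))
    (hz : ∀ k, z (k + 1) = z k - η • (z k - x (k + 1)))
    (hlam : ∀ k, lam (k + 1) = lam k + β • (Matrix.toEuclideanLin A (x (k + 1)) - b))
    (hprox : ∀ k, x (k + 1)
        = prox (z k - γ • Matrix.toEuclideanLin A.transpose (lam (k + 1)))) :
    ∀ k, 1 ≤ k →
      (Pfun f A b γ β (x k) (z k) (lam k) + 3 * α * ‖z k - z (k - 1)‖ ^ 2)
          - (Pfun f A b γ β (x (k + 1)) (z (k + 1)) (lam (k + 1))
              + 3 * α * ‖z (k + 1) - z k‖ ^ 2)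
        ≥ ((1 - ρ * γ) / (2 * γ) - 2 * α * (γ * Lf + 1) ^ 2) * ‖x (k + 1) - x k‖ ^ 2
          + (1 / (2 * γ) * (2 / η - 1) - 3 * α) * ‖z (k + 1) - z k‖ ^ 2
          + α * ‖z k - z (k - 1)‖ ^ 2
          + a / β * ‖lam (k + 1) - lam k‖ ^ 2 :=
  stmt_17_general n m A b f ρ γ η Lf β σ α a hγ0 hη0 hη2 hβ hσ hwc prox hlip hb hσA hαdef hadef x z
    lam hxmin hz hlam hprox
end
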